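/- arXiv:1907.11190 — 2 statements merged into one kernel-verified Lean document; each statement's English description precedes it below -/
import Mathlib

section
/- Let G be a group. In ν(G), the identities [g, h^φ, x^φ] = [g, h, x^φ] = [g, h^φ, x] = [g^φ, h, x^φ] = [g^φ, h^φ, x] = [g^φ, h, x] hold for all g, h, x ∈ G, where [a,b,c] denotes [[a,b],c]. -/
namespace TensorNu

universe u

/-- The commutator `[x,y] = x⁻¹y⁻¹xy`. -/
def comm {K : Type*} [Group K] (x y : K) : K := x⁻¹ * y⁻¹ * x * y

/-- Conjugation `x^y = y⁻¹xy`. -/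
def conj {K : Type*} [Group K] (x y : K) : K := y⁻¹ * x * y

variable (G : Type u) [Group G]

/-- The defining relators of `ν(G)`, as elements of the free group on `G ⊕ G`,
where `Sum.inl` corresponds to the canonical copy of `G` and `Sum.inr` to the
isomorphic copy `G^φ` (`g ↦ g^φ`).  They comprise the multiplication tables of
`G` and of `G^φ`, together with the relations
`[g₁,g₂^φ]^{g₃} = [g₁^{g₃},(g₂^{g₃})^φ]` and `[g₁,g₂^φ]^{g₃} = [g₁,g₂^φ]^{g₃^φ}`. -/
def nuRels : Set (FreeGroup (G ⊕ G)) :=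
  {r | (∃ g h : G, r = FreeGroup.of (Sum.inl g) * FreeGroup.of (Sum.inl h) *
          (FreeGroup.of (Sum.inl (g * h)))⁻¹)
     ∨ (∃ g h : G, r = FreeGroup.of (Sum.inr g) * FreeGroup.of (Sum.inr h) *
          (FreeGroup.of (Sum.inr (g * h)))⁻¹)
     ∨ (∃ g₁ g₂ g₃ : G, r =
          conj (comm (FreeGroup.of (Sum.inl g₁)) (FreeGroup.of (Sum.inr g₂)))
              (FreeGroup.of (Sum.inl g₃)) *
            (comm (FreeGroup.of (Sum.inl (conj g₁ g₃)))
              (FreeGroup.of (Sum.inr (conj g₂ g₃))))⁻¹)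
     ∨ (∃ g₁ g₂ g₃ : G, r =
          conj (comm (FreeGroup.of (Sum.inl g₁)) (FreeGroup.of (Sum.inr g₂)))
              (FreeGroup.of (Sum.inl g₃)) *
            (conj (comm (FreeGroup.of (Sum.inl g₁)) (FreeGroup.of (Sum.inr g₂)))
              (FreeGroup.of (Sum.inr g₃)))⁻¹)}

/-- The group `ν(G)`. -/
abbrev Nu := PresentedGroup (nuRels G)

/-- The canonical image of `g ∈ G` in `ν(G)`. -/
def ι (g : G) : Nu G := PresentedGroup.of (Sum.inl g)

/-- The canonical image `g^φ` of `g ∈ G` (via the copy `G^φ`) in `ν(G)`. -/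
def ιφ (g : G) : Nu G := PresentedGroup.of (Sum.inr g)

/-- The set `T⊗(G)` of tensors `[a, b^φ]`, `a, b ∈ G`. -/
def tensorSet : Set (Nu G) := {x | ∃ a b : G, x = comm (ι G a) (ιφ G b)}

/-- The image of `G` in `ν(G)` as a subgroup. -/
def GSub : Subgroup (Nu G) := Subgroup.closure (Set.range (ι G))

/-- The image of `G^φ` in `ν(G)` as a subgroup. -/
def GφSub : Subgroup (Nu G) := Subgroup.closure (Set.range (ιφ G))

/-- The non-abelian tensor square `[G, G^φ] ≤ ν(G)`. -/
def tensorSquare : Subgroup (Nu G) := ⁅GSub G, GφSub G⁆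

/-- `[S, x]`: the subgroup generated by the commutators `[s, x]`, `s ∈ S`. -/
def commSub {K : Type*} [Group K] (S : Set K) (x : K) : Subgroup K :=
  Subgroup.closure {c | ∃ s ∈ S, c = comm s x}

end TensorNu

namespace TensorNu

section Aux

variable {G : Type*} [Group G]

/-! Generic conjugation/commutator identities. -/
section generic
variable {K : Type*} [Group K] (x y z v w : K)
lemma conj_mul_right : conj x (y*z) = conj (conj x y) z := by simp only [conj]; group
lemma mul_conj : conj (x*y) z = conj x z * conj y z := by simp only [conj]; group
lemma inv_conj : conj x⁻¹ z = (conj x z)⁻¹ := by simp only [conj]; group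
lemma comm_eq : comm x y = x⁻¹ * conj x y := by simp only [comm, conj]; group
lemma comm_inv' : (comm x y)⁻¹ = comm y x := by simp only [comm]; group
lemma mul_comm_exp : comm (x*y) z = conj (comm x z) y * comm y z := by simp only [comm, conj]; group
lemma comm_conj : comm (conj x v) w = conj (comm x (conj w v⁻¹)) v := by simp only [comm, conj]; group
lemma inv_comm : comm x⁻¹ y = x * (conj x y)⁻¹ := by simp only [comm, conj]; group
lemma comm_one_left : comm (1:K) y = 1 := by simp [comm]
lemma map_conj {K' : Type*} [Group K'] (φ : K →* K') (a b : K) :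
    φ (conj a b) = conj (φ a) (φ b) := by simp [conj]
lemma map_comm' {K' : Type*} [Group K'] (φ : K →* K') (a b : K) :
    φ (comm a b) = comm (φ a) (φ b) := by simp [comm]
end generic

lemma mk_rel {r : FreeGroup (G ⊕ G)} (hr : r ∈ nuRels G) : PresentedGroup.mk (nuRels G) r = 1 :=
  (QuotientGroup.eq_one_iff r).mpr (Subgroup.subset_normalClosure hr)

lemma i_mul (g h : G) : ι G (g*h) = ι G g * ι G h := by
  have := mk_rel (G := G) (Or.inl ⟨g, h, rfl⟩)
  simp only [map_mul, map_inv] at this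
  rw [mul_inv_eq_one] at this
  exact this.symm

lemma f_mul (g h : G) : ιφ G (g*h) = ιφ G g * ιφ G h := by
  have := mk_rel (G := G) (Or.inr (Or.inl ⟨g, h, rfl⟩))
  simp only [map_mul, map_inv] at this
  rw [mul_inv_eq_one] at this
  exact this.symm

lemma i_one : ι G (1:G) = 1 := by
  have h := i_mul (G := G) 1 1
  rw [mul_one] at h
  exact (left_eq_mul.mp h)

lemma f_one : ιφ G (1:G) = 1 := by
  have h := f_mul (G := G) 1 1
  rw [mul_one] at h
  exact (left_eq_mul.mp h)

lemma i_inv (g : G) : ι G g⁻¹ = (ι G g)⁻¹ :=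
  eq_inv_of_mul_eq_one_left (by rw [← i_mul]; simp [i_one])

lemma f_inv (g : G) : ιφ G g⁻¹ = (ιφ G g)⁻¹ :=
  eq_inv_of_mul_eq_one_left (by rw [← f_mul]; simp [f_one])

lemma i_conj (a b : G) : ι G (conj a b) = conj (ι G a) (ι G b) := by
  simp [conj, i_mul, i_inv]

lemma f_conj (a b : G) : ιφ G (conj a b) = conj (ιφ G a) (ιφ G b) := by
  simp [conj, f_mul, f_inv]

lemma i_comm (a b : G) : ι G (comm a b) = comm (ι G a) (ι G b) := by
  simp [comm, i_mul, i_inv]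

lemma f_comm (a b : G) : ιφ G (comm a b) = comm (ιφ G a) (ιφ G b) := by
  simp [comm, f_mul, f_inv]

lemma R1 (a b c : G) : conj (comm (ι G a) (ιφ G b)) (ι G c)
    = comm (ι G (conj a c)) (ιφ G (conj b c)) := by
  have := mk_rel (G := G) (Or.inr (Or.inr (Or.inl ⟨a, b, c, rfl⟩)))
  simp only [map_mul, map_inv, map_conj, map_comm'] at this
  rw [mul_inv_eq_one] at this
  exact this

lemma R2 (a b c : G) : conj (comm (ι G a) (ιφ G b)) (ι G c)
    = conj (comm (ι G a) (ιφ G b)) (ιφ G c) := by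
  have := mk_rel (G := G) (Or.inr (Or.inr (Or.inr ⟨a, b, c, rfl⟩)))
  simp only [map_mul, map_inv, map_conj, map_comm'] at this
  rw [mul_inv_eq_one] at this
  exact this

/-- conj of a tensor by `ιφ c`. -/
lemma K2 (a b c : G) : conj (comm (ι G a) (ιφ G b)) (ιφ G c)
    = comm (ι G (conj a c)) (ιφ G (conj b c)) := by rw [← R2, R1]

/-- expansion of a tensor in its first argument -/
lemma texp (a b c : G) : comm (ι G (a*b)) (ιφ G c)
    = comm (ι G (conj a b)) (ιφ G (conj c b)) * comm (ι G b) (ιφ G c) := by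
  rw [i_mul, mul_comm_exp, R1]


variable {g h x : G}

/-- S1 : [ [g,h^φ], x^φ ] = [ [g,h^φ], x ] -/
lemma S1 (g h x : G) : comm (comm (ι G g) (ιφ G h)) (ιφ G x)
    = comm (comm (ι G g) (ιφ G h)) (ι G x) := by
  rw [comm_eq (comm (ι G g) (ιφ G h)) (ιφ G x), comm_eq (comm (ι G g) (ιφ G h)) (ι G x),
    K2, R1]

/-- S2 : [ [g,h^φ], x^φ ] = [ [g,h], x^φ ]  (RHS as a tensor) -/
lemma S2 (g h x : G) : comm (comm (ι G g) (ιφ G h)) (ιφ G x)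
    = comm (ι G (comm g h)) (ιφ G x) := by
  have e1 : comm (ι G g) (ιφ G h) = ι G g⁻¹ * conj (ι G g) (ιφ G h) := by
    rw [i_inv]; exact comm_eq _ _
  conv_lhs => rw [e1, mul_comm_exp]
  -- second factor
  rw [comm_conj, ← f_inv, ← f_conj, K2]
  -- first factor : expand conj (ι g) (ιφ h) as a product and conjugate stepwise
  rw [show conj (ι G g) (ιφ G h) = ((ιφ G h)⁻¹ * ι G g) * (ιφ G h) from rfl]
  rw [conj_mul_right, conj_mul_right, ← f_inv, K2, R1, K2]
  -- right-hand side
  conv_rhs => rw [show comm g h = g⁻¹ * conj g h from comm_eq _ _, texp]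
  have a1 : conj (conj (conj g⁻¹ h⁻¹) g) h = conj g⁻¹ (conj g h) := by
    simp only [conj]; group
  have a2 : conj (conj (conj x h⁻¹) g) h = conj x (conj g h) := by
    simp only [conj]; group
  have a3 : conj (conj x h⁻¹) h = x := by simp only [conj]; group
  rw [a1, a2, a3]

/-- S3 : [ [g,h^φ], x ] = [ [g,h], x^φ ] -/
lemma S3 (g h x : G) : comm (comm (ι G g) (ιφ G h)) (ι G x)
    = comm (ι G (comm g h)) (ιφ G x) := (S1 g h x).symm.trans (S2 g h x)

/-- conjugating a tensor by a "reversed" tensor -/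
lemma keyConj (a b u v : G) :
    conj (comm (ι G a) (ιφ G b)) (comm (ι G u) (ιφ G v))
    = comm (ι G (conj a (comm u v))) (ιφ G (conj b (comm u v))) := by
  rw [show comm (ι G u) (ιφ G v) = (((ι G u)⁻¹ * (ιφ G v)⁻¹) * ι G u) * ιφ G v from rfl]
  rw [conj_mul_right, conj_mul_right, conj_mul_right, ← i_inv, ← f_inv, R1, K2, R1, K2]
  have b1 : conj (conj (conj (conj a u⁻¹) v⁻¹) u) v = conj a (comm u v) := by
    simp only [conj, comm]; group
  have b2 : conj (conj (conj (conj b u⁻¹) v⁻¹) u) v = conj b (comm u v) := by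
    simp only [conj, comm]; group
  rw [b1, b2]

lemma hc (g h x : G) :
    comm (comm (ι G g) (ιφ G h) * comm (ι G h) (ιφ G g)) (ι G x) = 1 := by
  rw [mul_comm_exp, S3 g h x, S3 h g x, keyConj, ← texp]
  have : comm g h * comm h g = 1 := by simp only [comm]; group
  rw [this, i_one, comm_one_left]

lemma kappa (g h x : G) :
    comm (ι G (conj g x)) (ιφ G (conj h x)) * comm (ι G (conj h x)) (ιφ G (conj g x))
    = comm (ι G g) (ιφ G h) * comm (ι G h) (ιφ G g) := by
  have h2 : conj (comm (ι G g) (ιφ G h) * comm (ι G h) (ιφ G g)) (ι G x)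
      = comm (ι G g) (ιφ G h) * comm (ι G h) (ιφ G g) := by
    have h1 := hc g h x
    rw [comm_eq] at h1
    exact (inv_mul_eq_one.mp h1).symm
  rw [mul_conj, R1, R1] at h2
  exact h2

/-- S4 : [ [g,h^φ], x ] = [ [g^φ,h], x ] -/
lemma S4 (g h x : G) : comm (comm (ι G g) (ιφ G h)) (ι G x)
    = comm (comm (ιφ G g) (ι G h)) (ι G x) := by
  rw [show comm (ιφ G g) (ι G h) = (comm (ι G h) (ιφ G g))⁻¹ from (comm_inv' _ _).symm,
    inv_comm, comm_eq, R1, R1]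
  have hκ := kappa g h x
  rw [eq_mul_inv_of_mul_eq hκ]
  group

/-- S1m : [ [g^φ,h], x^φ ] = [ [g^φ,h], x ] -/
lemma S1m (g h x : G) : comm (comm (ιφ G g) (ι G h)) (ιφ G x)
    = comm (comm (ιφ G g) (ι G h)) (ι G x) := by
  rw [show comm (ιφ G g) (ι G h) = (comm (ι G h) (ιφ G g))⁻¹ from (comm_inv' _ _).symm,
    inv_comm, inv_comm, R1, K2]

lemma K1m (a b c : G) : conj (comm (ιφ G a) (ι G b)) (ι G c)
    = comm (ιφ G (conj a c)) (ι G (conj b c)) := by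
  rw [show comm (ιφ G a) (ι G b) = (comm (ι G b) (ιφ G a))⁻¹ from (comm_inv' _ _).symm,
    inv_conj, R1, comm_inv']

lemma K2m (a b c : G) : conj (comm (ιφ G a) (ι G b)) (ιφ G c)
    = comm (ιφ G (conj a c)) (ι G (conj b c)) := by
  rw [show comm (ιφ G a) (ι G b) = (comm (ι G b) (ιφ G a))⁻¹ from (comm_inv' _ _).symm,
    inv_conj, K2, comm_inv']

lemma texpm (a b c : G) : comm (ιφ G (a*b)) (ι G c)
    = comm (ιφ G (conj a b)) (ι G (conj c b)) * comm (ιφ G b) (ι G c) := by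
  rw [f_mul, mul_comm_exp, K2m]

/-- S2m : [ [g^φ,h], x ] = [ [g^φ,h^φ], x ] -/
lemma S2m (g h x : G) : comm (comm (ιφ G g) (ι G h)) (ι G x)
    = comm (ιφ G (comm g h)) (ι G x) := by
  have e1 : comm (ιφ G g) (ι G h) = ιφ G g⁻¹ * conj (ιφ G g) (ι G h) := by
    rw [f_inv]; exact comm_eq _ _
  conv_lhs => rw [e1, mul_comm_exp]
  rw [comm_conj, ← i_inv, ← i_conj, K1m]
  rw [show conj (ιφ G g) (ι G h) = ((ι G h)⁻¹ * ιφ G g) * (ι G h) from rfl]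
  rw [conj_mul_right, conj_mul_right, ← i_inv, K1m, K2m, K1m]
  conv_rhs => rw [show comm g h = g⁻¹ * conj g h from comm_eq _ _, texpm]
  have a1 : conj (conj (conj g⁻¹ h⁻¹) g) h = conj g⁻¹ (conj g h) := by
    simp only [conj]; group
  have a2 : conj (conj (conj x h⁻¹) g) h = conj x (conj g h) := by
    simp only [conj]; group
  have a3 : conj (conj x h⁻¹) h = x := by simp only [conj]; group
  rw [a1, a2, a3]


end Aux

/-- In `ν(G)`:
`[g, h^φ, x^φ] = [g, h, x^φ] = [g, h^φ, x] = [g^φ, h, x^φ] = [g^φ, h^φ, x] = [g^φ, h, x]`. -/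
theorem comm_comm_mixed (G : Type u) [Group G] (g h x : G) :
    comm (comm (ι G g) (ιφ G h)) (ιφ G x) = comm (comm (ι G g) (ι G h)) (ιφ G x) ∧
    comm (comm (ι G g) (ι G h)) (ιφ G x) = comm (comm (ι G g) (ιφ G h)) (ι G x) ∧
    comm (comm (ι G g) (ιφ G h)) (ι G x) = comm (comm (ιφ G g) (ι G h)) (ιφ G x) ∧
    comm (comm (ιφ G g) (ι G h)) (ιφ G x) = comm (comm (ιφ G g) (ιφ G h)) (ι G x) ∧
    comm (comm (ιφ G g) (ιφ G h)) (ι G x) = comm (comm (ιφ G g) (ι G h)) (ι G x) := by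
  refine ⟨?_, ?_, ?_, ?_, ?_⟩
  · rw [← i_comm]; exact S2 g h x
  · rw [← i_comm]; exact (S2 g h x).symm.trans (S1 g h x)
  · exact (S4 g h x).trans (S1m g h x).symm
  · rw [← f_comm]; exact (S1m g h x).trans (S2m g h x)
  · rw [← f_comm]; exact (S2m g h x).symm

end TensorNu
end

section
/- Let G be a group and ρ : ν(G) → G the epimorphism determined by g ↦ g and h^φ ↦ h. Then for every α ∈ ν(G) and all x, y ∈ G, one has [x, y^φ]^α = [x, y^φ]^{ρ(α)} = [x, y^φ]^{ρ(α)^φ} in ν(G). -/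
/-!
The relation `[g₁,g₂^φ]^{g₃} = [g₁,g₂^φ]^{g₃^φ}` says that `h^φ` and `h` act in the same way on
tensors by conjugation, and `[g₁,g₂^φ]^{g₃} = [g₁^{g₃},(g₂^{g₃})^φ]` says that `G` permutes the
tensors. Hence the elements `α` whose conjugation action on tensors agrees with that of `ρ(α) ∈ G`
form a subgroup, which contains all generators of `ν(G)` and is therefore everything.
-/

namespace TensorNu

section Conj

variable {K L : Type*} [Group K] [Group L]

lemma conj_one (a : K) : conj a 1 = a := by
  simp [conj]

lemma conj_mul (a b c : K) : conj a (b * c) = conj (conj a b) c := by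
  simp [conj, mul_assoc]

lemma map_conj_s9 (f : K →* L) (a b : K) : f (conj a b) = conj (f a) (f b) := by
  simp [conj]

lemma map_comm (f : K →* L) (a b : K) : f (comm a b) = comm (f a) (f b) := by
  simp [comm]

theorem conj_eq_conj_map_of_mem_closure {T : Set K} (σ : K →* K)
    (hT : ∀ t ∈ T, ∀ k, conj t (σ k) ∈ T) {S : Set K}
    (hS : ∀ s ∈ S, ∀ t ∈ T, conj t s = conj t (σ s)) {α : K} (hα : α ∈ Subgroup.closure S) :
    ∀ t ∈ T, conj t α = conj t (σ α) := by
  induction hα using Subgroup.closure_induction with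
  | mem s hs => exact hS s hs
  | one => simp [conj]
  | mul α β _ _ hα hβ =>
    intro t ht
    rw [conj_mul, hα t ht, hβ _ (hT t ht α), ← conj_mul, map_mul]
  | inv α _ hα =>
    intro t ht
    have ht' : conj t (σ α⁻¹) ∈ T := hT t ht α⁻¹
    have hback : conj (conj t (σ α⁻¹)) α = t := by
      rw [hα _ ht', ← conj_mul, map_inv, inv_mul_cancel, conj_one]
    calc conj t α⁻¹ = conj (conj (conj t (σ α⁻¹)) α) α⁻¹ := by rw [hback]
      _ = conj t (σ α⁻¹) := by rw [← conj_mul, mul_inv_cancel, conj_one]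

end Conj

variable {G : Type u} [Group G]

lemma ι_mul (g h : G) : ι G (g * h) = ι G g * ι G h :=
  (PresentedGroup.mk_eq_mk_of_mul_inv_mem (Or.inl ⟨g, h, rfl⟩)).symm

variable (G) in
def ιHom : G →* Nu G := MonoidHom.mk' (ι G) ι_mul

lemma conj_tensor_ι (g₁ g₂ g₃ : G) :
    conj (comm (ι G g₁) (ιφ G g₂)) (ι G g₃) = comm (ι G (conj g₁ g₃)) (ιφ G (conj g₂ g₃)) := by
  have h := PresentedGroup.mk_eq_mk_of_mul_inv_mem
    (rels := nuRels G) (Or.inr (Or.inr (Or.inl ⟨g₁, g₂, g₃, rfl⟩)))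
  rw [map_conj_s9, map_comm, map_comm] at h
  exact h

lemma conj_tensor_ι_eq_conj_tensor_ιφ (g₁ g₂ g₃ : G) :
    conj (comm (ι G g₁) (ιφ G g₂)) (ι G g₃) = conj (comm (ι G g₁) (ιφ G g₂)) (ιφ G g₃) := by
  have h := PresentedGroup.mk_eq_mk_of_mul_inv_mem
    (rels := nuRels G) (Or.inr (Or.inr (Or.inr ⟨g₁, g₂, g₃, rfl⟩)))
  rw [map_conj_s9, map_conj_s9, map_comm] at h
  exact h

lemma conj_mem_tensorSet_of_ι {t : Nu G} (ht : t ∈ tensorSet G) (g : G) :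
    conj t (ι G g) ∈ tensorSet G := by
  obtain ⟨a, b, rfl⟩ := ht
  exact ⟨_, _, conj_tensor_ι a b g⟩

/-- For every `α ∈ ν(G)` and `x, y ∈ G`:
`[x, y^φ]^α = [x, y^φ]^{ρ(α)} = [x, y^φ]^{ρ(α)^φ}`. -/
theorem conj_tensor_rho (G : Type u) [Group G] (ρ : Nu G →* G)
    (hρ₁ : ∀ g : G, ρ (ι G g) = g) (hρ₂ : ∀ h : G, ρ (ιφ G h) = h)
    (α : Nu G) (x y : G) :
    conj (comm (ι G x) (ιφ G y)) α = conj (comm (ι G x) (ιφ G y)) (ι G (ρ α)) ∧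
    conj (comm (ι G x) (ιφ G y)) α = conj (comm (ι G x) (ιφ G y)) (ιφ G (ρ α)) := by
  have hgen : ∀ s ∈ Set.range (PresentedGroup.of (rels := nuRels G)), ∀ t ∈ tensorSet G,
      conj t s = conj t (ιHom G (ρ s)) := by
    rintro _ ⟨g | g, rfl⟩ _ ⟨a, b, rfl⟩
    · change conj _ (ι G g) = conj _ (ι G (ρ (ι G g)))
      rw [hρ₁]
    · change conj _ (ιφ G g) = conj _ (ι G (ρ (ιφ G g)))
      rw [hρ₂, conj_tensor_ι_eq_conj_tensor_ιφ]
  have hα : α ∈ Subgroup.closure (Set.range PresentedGroup.of) := by simp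
  have key := conj_eq_conj_map_of_mem_closure ((ιHom G).comp ρ)
    (fun t ht k => conj_mem_tensorSet_of_ι ht (ρ k)) hgen hα _ ⟨x, y, rfl⟩
  exact ⟨key, key.trans (conj_tensor_ι_eq_conj_tensor_ιφ x y (ρ α))⟩

end TensorNu
end
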